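/- The Wagner graph has domination number exactly 3, and the graph obtained from the Wagner graph by adding one pendant vertex to each of its 8 vertices has the property that any set of 3 edges fails to dominate all edges (so the line graph of this graph has domination number at least 4). -/

import Mathlib

/-!
Two closed neighbourhoods in the cubic Wagner graph cover at most `2 * 4 = 8` vertices, and a finite
check shows that no two are complementary. In the pendant graph the eight pendant edges are pairwise
disjoint, while three edges have at most six endpoints, each lying on at most one pendant edge; so
some pendant edge meets none of the three.
-/

open SimpleGraph

variable {V : Type*}

/-- A graph is claw-free if it has no induced `K_{1,3}`. -/
def SimpleGraph.ClawFree (G : SimpleGraph V) : Prop :=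
  ¬ ∃ (c a b d : V), ([c, a, b, d] : List V).Nodup ∧
    G.Adj c a ∧ G.Adj c b ∧ G.Adj c d ∧ ¬ G.Adj a b ∧ ¬ G.Adj a d ∧ ¬ G.Adj b d

/-- `X` is a dominating set of `G`. -/
def SimpleGraph.IsDominatingSet (G : SimpleGraph V) (X : Set V) : Prop :=
  ∀ v : V, v ∈ X ∨ ∃ u ∈ X, G.Adj u v

/-- The domination number of `G` is at most `n`. -/
def SimpleGraph.dominationNumberLE (G : SimpleGraph V) (n : ℕ) : Prop :=
  ∃ X : Finset V, X.card ≤ n ∧ G.IsDominatingSet ↑X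

/-- `G` is `k`-connected: it has at least `k+1` vertices and deleting any set of
fewer than `k` vertices leaves it connected. -/
def SimpleGraph.KConnected (G : SimpleGraph V) [Fintype V] (k : ℕ) : Prop :=
  k + 1 ≤ Fintype.card V ∧
    ∀ S : Finset V, S.card < k → (G.induce ((↑S : Set V)ᶜ)).Connected

/-- `G` is hamiltonian-connected: any two distinct vertices are joined by a
hamiltonian path. -/
def SimpleGraph.HamiltonianConnected (G : SimpleGraph V) [DecidableEq V] : Prop :=
  ∀ u v : V, u ≠ v → ∃ p : G.Walk u v, p.IsHamiltonian



/-- A multigraph on vertex type `V` with edge type `E`: each edge is assigned an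
unordered pair of endpoints (possibly equal, for loops). -/
structure Multigraph (V : Type*) (E : Type*) where
  inc : E → Sym2 V

namespace Multigraph

open scoped Classical

variable {V E : Type*} {M : Multigraph V E}

/-- Walks in a multigraph. -/
inductive Walk (M : Multigraph V E) : V → V → Type _ where
  | nil (v : V) : Walk M v v
  | cons {u v w : V} (e : E) (h : M.inc e = s(u, v)) (p : Walk M v w) : Walk M u w

/-- The list of edges of a walk. -/
def Walk.edges : ∀ {u v : V}, M.Walk u v → List E
  | _, _, .nil _ => []
  | _, _, .cons e _ p => e :: p.edges

/-- The list of vertices visited by a walk, in order. -/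
def Walk.support : ∀ {u v : V}, M.Walk u v → List V
  | _, v, .nil _ => [v]
  | u, _, .cons _ _ p => u :: p.support

/-- A trail is a walk with no repeated edge. -/
def Walk.IsTrail {u v : V} (p : M.Walk u v) : Prop := p.edges.Nodup

/-- The interior vertices of a walk (all vertices except the two ends). -/
def Walk.interior {u v : V} (p : M.Walk u v) : List V := p.support.tail.dropLast

/-- Two vertices are reachable if joined by a walk. -/
def Reachable (M : Multigraph V E) (u v : V) : Prop := Nonempty (M.Walk u v)

/-- Reachability avoiding a set `R` of edges. -/
def ReachableOff (M : Multigraph V E) (R : Set E) (u v : V) : Prop :=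
  ∃ p : M.Walk u v, ∀ e ∈ p.edges, e ∉ R

/-- A multigraph is connected if every two vertices are joined by a walk. -/
def Connected (M : Multigraph V E) : Prop := ∀ u v : V, M.Reachable u v

/-- A multigraph is `k`-edge-connected if it stays connected after the removal of
any set of fewer than `k` edges. -/
def KEdgeConnected (M : Multigraph V E) (k : ℕ) : Prop :=
  ∀ R : Finset E, R.card < k → ∀ u v : V, M.ReachableOff (↑R) u v

/-- An edge-cut `R` is essential if after its removal two remaining edges lie in
different components. -/
def IsEssentialCut (M : Multigraph V E) (R : Finset E) : Prop :=
  ∃ (e f : E) (u v : V), e ∉ R ∧ f ∉ R ∧ u ∈ M.inc e ∧ v ∈ M.inc f ∧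
    ¬ M.ReachableOff (↑R) u v

/-- A multigraph is essentially `k`-edge-connected if every essential edge-cut has
size at least `k`. -/
def EssentiallyKEdgeConnected (M : Multigraph V E) (k : ℕ) : Prop :=
  ∀ R : Finset E, M.IsEssentialCut R → k ≤ R.card

/-- The line graph of a multigraph: vertices are the edges, adjacent when sharing
an endpoint. -/
def lineGraph (M : Multigraph V E) : SimpleGraph E where
  Adj e f := e ≠ f ∧ ∃ v : V, v ∈ M.inc e ∧ v ∈ M.inc f
  symm := by
    constructor
    rintro e f ⟨hne, v, hv1, hv2⟩
    exact ⟨hne.symm, v, hv2, hv1⟩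
  loopless := by constructor; rintro e ⟨hne, -⟩; exact hne rfl

/-- The degree of a vertex: the number of edge-ends at it (loops count twice). -/
noncomputable def degree (M : Multigraph V E) [Fintype E] (v : V) : ℕ :=
  ∑ e : E, Sym2.lift ⟨fun a b => (if a = v then 1 else 0) + (if b = v then 1 else 0),
    fun a b => by ring⟩ (M.inc e)

/-- A pendant edge: an edge with an endpoint of degree `1`. -/
def IsPendant (M : Multigraph V E) [Fintype E] (e : E) : Prop :=
  ∃ v : V, v ∈ M.inc e ∧ M.degree v = 1

/-- A closed trail whose vertex set dominates every edge. -/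
def HasDominatingClosedTrail (M : Multigraph V E) : Prop :=
  ∃ (v : V) (p : M.Walk v v), p.IsTrail ∧
    ∀ e : E, ∃ x : V, x ∈ M.inc e ∧ x ∈ p.support

/-- A closed trail through every vertex. -/
def HasSpanningClosedTrail (M : Multigraph V E) : Prop :=
  ∃ (v : V) (p : M.Walk v v), p.IsTrail ∧ ∀ x : V, x ∈ p.support

/-- An internally dominating `(e₁,e₂)`-trail: a trail with first edge `e₁` and last
edge `e₂` whose interior vertices dominate every edge. -/
def HasIDT (M : Multigraph V E) (e₁ e₂ : E) : Prop :=
  ∃ (u v : V) (p : M.Walk u v), p.IsTrail ∧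
    p.edges.head? = some e₁ ∧ p.edges.getLast? = some e₂ ∧
    ∀ e : E, ∃ x : V, x ∈ M.inc e ∧ x ∈ p.interior

end Multigraph


/-- The Wagner graph: the 8-cycle on `ZMod 8` together with the four main
diagonals (`i` is adjacent to `i ± 1` and to `i + 4`). -/
def wagner : SimpleGraph (ZMod 8) :=
  SimpleGraph.fromRel fun i j => j - i = 1 ∨ j - i = 4

/-- The graph obtained from the Wagner graph by adding one pendant edge at each of
its 8 vertices, as a multigraph: the original vertices are `Sum.inl i` and the
pendant leaves are `Sum.inr i`. -/
def wagnerPendant :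
    Multigraph (ZMod 8 ⊕ ZMod 8) ({p : Sym2 (ZMod 8) // p ∈ wagner.edgeSet} ⊕ ZMod 8) where
  inc e :=
    match e with
    | Sum.inl p => (p : Sym2 (ZMod 8)).map Sum.inl
    | Sum.inr i => s(Sum.inl i, Sum.inr i)

noncomputable instance :
    Fintype ({p : Sym2 (ZMod 8) // p ∈ wagner.edgeSet} ⊕ ZMod 8) :=
  Fintype.ofFinite _

noncomputable instance :
    DecidableEq ({p : Sym2 (ZMod 8) // p ∈ wagner.edgeSet} ⊕ ZMod 8) :=
  Classical.decEq _

instance : DecidableRel wagner.Adj := fun a b =>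
  decidable_of_iff _ (SimpleGraph.fromRel_adj _ a b).symm

theorem Finset.exists_subset_pair_of_card_le_two {α : Type*} [DecidableEq α] [Nonempty α]
    {s : Finset α} (hs : s.card ≤ 2) : ∃ a b : α, s ⊆ {a, b} := by
  obtain h | h | h : s.card = 0 ∨ s.card = 1 ∨ s.card = 2 := by omega
  · obtain ⟨a⟩ := ‹Nonempty α›
    exact ⟨a, a, by simp [Finset.card_eq_zero.mp h]⟩
  · obtain ⟨a, rfl⟩ := Finset.card_eq_one.mp h
    exact ⟨a, a, by simp⟩
  · obtain ⟨a, b, -, rfl⟩ := Finset.card_eq_two.mp h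
    exact ⟨a, b, subset_rfl⟩

theorem SimpleGraph.IsDominatingSet.mono {G : SimpleGraph V} {X Y : Set V} (hXY : X ⊆ Y)
    (hX : G.IsDominatingSet X) : G.IsDominatingSet Y := fun v =>
  (hX v).imp (@hXY v) fun ⟨u, hu, huv⟩ => ⟨u, hXY hu, huv⟩

theorem SimpleGraph.not_dominationNumberLE_two {G : SimpleGraph V} [DecidableEq V] [Nonempty V]
    (h : ∀ a b : V, ¬ G.IsDominatingSet {a, b}) : ¬ G.dominationNumberLE 2 := by
  rintro ⟨X, hX, hdom⟩
  obtain ⟨a, b, hab⟩ := Finset.exists_subset_pair_of_card_le_two hX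
  exact h a b (hdom.mono (by simpa using Finset.coe_subset.mpr hab))

theorem wagner_isDominatingSet_triple : wagner.IsDominatingSet {0, 1, 2} := by
  simp only [IsDominatingSet, Set.mem_insert_iff, Set.mem_singleton_iff, exists_eq_or_imp,
    exists_eq_left]
  decide

theorem wagner_not_isDominatingSet_pair (a b : ZMod 8) : ¬ wagner.IsDominatingSet {a, b} := by
  simp only [IsDominatingSet, Set.mem_insert_iff, Set.mem_singleton_iff, exists_eq_or_imp,
    exists_eq_left]
  revert a b
  decide

namespace Multigraph

variable {V E ι : Type*}

theorem exists_matching_edge_disjoint_of_card_lt [Fintype ι] (M : Multigraph V E) (g : ι → E)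
    (hg : ∀ i j v, v ∈ M.inc (g i) → v ∈ M.inc (g j) → i = j) (F : Finset E)
    (hF : 2 * F.card < Fintype.card ι) :
    ∃ i, ∀ f ∈ F, ¬ ∃ v, v ∈ M.inc (g i) ∧ v ∈ M.inc f := by
  classical
  let hit : E → Finset ι := fun f => {i | ∃ v, v ∈ M.inc (g i) ∧ v ∈ M.inc f}
  have at_vertex (v : V) : ({i | v ∈ M.inc (g i)} : Finset ι).card ≤ 1 :=
    Finset.card_le_one.mpr fun i hi j hj => hg i j v (by simpa using hi) (by simpa using hj)
  have hit_card (f : E) : (hit f).card ≤ 2 := by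
    obtain ⟨⟨a, b⟩, hab⟩ := Sym2.mk_surjective (M.inc f)
    let at_a : Finset ι := {i | a ∈ M.inc (g i)}
    let at_b : Finset ι := {i | b ∈ M.inc (g i)}
    calc (hit f).card ≤ (at_a ∪ at_b).card := by
          refine Finset.card_le_card fun i hi => ?_
          simp only [hit, at_a, at_b, ← hab, Function.uncurry_apply_pair, Sym2.mem_iff,
            Finset.mem_filter, Finset.mem_univ, true_and, Finset.mem_union] at hi ⊢
          obtain ⟨v, hv, rfl | rfl⟩ := hi
          exacts [Or.inl hv, Or.inr hv]
      _ ≤ 2 := (Finset.card_union_le _ _).trans (add_le_add (at_vertex a) (at_vertex b))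
  obtain ⟨i, -, hi⟩ : ∃ i ∈ Finset.univ, i ∉ F.biUnion hit := by
    refine Finset.exists_mem_notMem_of_card_lt_card ?_
    calc (F.biUnion hit).card ≤ F.card * 2 :=
          Finset.card_biUnion_le_card_mul F hit 2 fun f _ => hit_card f
      _ < Fintype.card ι := by omega
  exact ⟨i, fun f hf hv => hi (Finset.mem_biUnion.mpr ⟨f, hf, by simpa [hit] using hv⟩)⟩

end Multigraph

theorem eq_of_mem_wagnerPendant_inc_inr (i j : ZMod 8) (v : ZMod 8 ⊕ ZMod 8)
    (hi : v ∈ wagnerPendant.inc (Sum.inr i)) (hj : v ∈ wagnerPendant.inc (Sum.inr j)) :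
    i = j := by
  simp only [wagnerPendant, Sym2.mem_iff] at hi hj
  rcases hi with rfl | rfl <;> simpa using hj

/-- The Wagner graph has domination number exactly `3`, and in the graph obtained
from it by adding one pendant edge at each vertex, no set of at most `3` edges
dominates all edges: some edge shares an endpoint with none of them (hence the
line graph of that graph has domination number at least `4`). -/
theorem stmt18 :
    (wagner.dominationNumberLE 3 ∧ ¬ wagner.dominationNumberLE 2) ∧
    ∀ F : Finset ({p : Sym2 (ZMod 8) // p ∈ wagner.edgeSet} ⊕ ZMod 8),
      F.card ≤ 3 →
      ∃ e, ∀ f ∈ F, ¬ ∃ v : ZMod 8 ⊕ ZMod 8,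
        v ∈ wagnerPendant.inc e ∧ v ∈ wagnerPendant.inc f := by
  refine ⟨⟨⟨{0, 1, 2}, by decide, by simpa using wagner_isDominatingSet_triple⟩,
    not_dominationNumberLE_two wagner_not_isDominatingSet_pair⟩, fun F hF => ?_⟩
  obtain ⟨i, hi⟩ := wagnerPendant.exists_matching_edge_disjoint_of_card_lt Sum.inr
    eq_of_mem_wagnerPendant_inc_inr F (by simp only [ZMod.card]; omega)
  exact ⟨Sum.inr i, hi⟩
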